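/- arXiv:2507.12338 — 4 statements merged into one kernel-verified Lean document; each statement's English description precedes it below -/
import Mathlib

section
/- For all r, v : Fin n → ℝ one has s(Q r − Q v, P r − P v) ≥ 0, i.e. ∑_{i} σ i · ((Q r) i − (Q v) i) · ((P r) i − (P v) i) ≥ 0. -/
/- Truncation `x ↦ max a (min x b)` and its complement `x ↦ x - max a (min x b)` are both
monotone, so coordinatewise their increments between `v` and `r` have the same sign and each
summand of `s (Q r - Q v) (P r - P v)` is nonnegative. -/

lemma monotone_max_min {α : Type*} [LinearOrder α] (a b : α) :
    Monotone fun x => max a (min x b) :=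
  monotone_const.max (monotone_id.min monotone_const)

lemma monotone_sub_max_min {α : Type*} [AddCommGroup α] [LinearOrder α] [IsOrderedAddMonoid α]
    (a b : α) : Monotone fun x => x - max a (min x b) := by
  intro x y hxy
  dsimp only
  grind

theorem stmt_1_general (n : ℕ) (a b σ : Fin n → ℝ)
    (hσ : ∀ i, 0 < σ i)
    (P Q : (Fin n → ℝ) → (Fin n → ℝ))
    (hP : ∀ v i, P v i = max (a i) (min (v i) (b i)))
    (hQ : ∀ v, Q v = v - P v)
    (s : (Fin n → ℝ) → (Fin n → ℝ) → ℝ)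
    (hs : ∀ w v, s w v = ∑ i, σ i * w i * v i)
    (r v : Fin n → ℝ) :
    s (Q r - Q v) (P r - P v) ≥ 0 := by
  rw [hs]
  refine Finset.sum_nonneg fun i _ => ?_
  have hmonovary : Monovary (fun x => x - max (a i) (min x (b i)))
      (fun x => max (a i) (min x (b i))) :=
    (monotone_sub_max_min (a i) (b i)).monovary (monotone_max_min (a i) (b i))
  simp only [Pi.sub_apply, hQ, hP, mul_assoc]
  exact mul_nonneg (hσ i).le (hmonovary.sub_mul_sub_nonneg (v i) (r i))

/-- Nodal form of Lemma `LEM:generalize_Barranachea`: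
for the coordinatewise truncation `P`, its complement `Q = id - P`, and the
positively-weighted bilinear form `s`, one has `s (Q r - Q v) (P r - P v) ≥ 0`. -/
theorem stmt_1 (n : ℕ) (a b σ : Fin n → ℝ)
    (hab : ∀ i, a i ≤ b i) (hσ : ∀ i, 0 < σ i)
    (P Q : (Fin n → ℝ) → (Fin n → ℝ))
    (hP : ∀ v i, P v i = max (a i) (min (v i) (b i)))
    (hQ : ∀ v, Q v = v - P v)
    (s : (Fin n → ℝ) → (Fin n → ℝ) → ℝ)
    (hs : ∀ w v, s w v = ∑ i, σ i * w i * v i)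
    (r v : Fin n → ℝ) :
    s (Q r - Q v) (P r - P v) ≥ 0 :=
  stmt_1_general n a b σ hσ P Q hP hQ s hs r v
end

section
/- For all v, r, z : Fin n → ℝ one has |A(P v − P r, z) + s(Q v − Q r, z)| ≤ 3 · √(s(v − r, v − r)) · √(s(z, z)); in particular the operator T̃₁ defined by [T̃₁ r, z] = A(P r, z) + s(Q r, z) is Lipschitz continuous with respect to the norm induced by s. -/
/-!
The truncation `P` is coordinatewise 1-Lipschitz, so `d := P v - P r` satisfies
`s(d, d) ≤ s(e, e)` for `e := v - r`, and `Q v - Q r = e - d`. Cauchy–Schwarz for `A` and for `s`,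
together with `A ≤ s` on the diagonal, bounds each of `A(d, z)`, `s(e, z)`, `s(d, z)` by
`√s(e, e) · √s(z, z)`, whence the constant `3`.
-/

open LinearMap (BilinForm)

theorem abs_max_min_sub_max_min_le {α : Type*} [AddCommGroup α] [LinearOrder α]
    [IsOrderedAddMonoid α] (a b x y : α) :
    |max a (min x b) - max a (min y b)| ≤ |x - y| :=
  calc |max a (min x b) - max a (min y b)|
      ≤ |min x b - min y b| := by
        simpa only [max_comm a] using abs_max_sub_max_le_abs (min x b) (min y b) a
    _ ≤ max |x - y| |b - b| := abs_min_sub_min_le_max x b y b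
    _ = |x - y| := by rw [sub_self, abs_zero, max_eq_left (abs_nonneg _)]

section BilinForm

variable {E : Type*} [AddCommGroup E] [Module ℝ E]

def bilinFormOfSymm (B : E → E → ℝ) (hadd : ∀ x y z, B (x + y) z = B x z + B y z)
    (hsmul : ∀ (c : ℝ) x z, B (c • x) z = c * B x z) (hsymm : ∀ x z, B x z = B z x) :
    BilinForm ℝ E :=
  LinearMap.mk₂ ℝ B hadd hsmul
    (fun x y z => by rw [hsymm, hadd, hsymm y, hsymm z])
    (fun c x z => by rw [hsymm, hsmul, hsymm z, smul_eq_mul])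

theorem bilinFormOfSymm_isSymm (B : E → E → ℝ) (hadd : ∀ x y z, B (x + y) z = B x z + B y z)
    (hsmul : ∀ (c : ℝ) x z, B (c • x) z = c * B x z) (hsymm : ∀ x z, B x z = B z x) :
    (bilinFormOfSymm B hadd hsmul hsymm).IsSymm :=
  ⟨fun x z => hsymm x z⟩

theorem abs_apply_le_sqrt_mul_sqrt (B : BilinForm ℝ E) (hB0 : ∀ x, 0 ≤ B x x) (hB : B.IsSymm)
    (x y : E) : |B x y| ≤ √(B x x) * √(B y y) := by
  rw [← Real.sqrt_mul (hB0 x), ← Real.sqrt_sq_eq_abs]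
  exact Real.sqrt_le_sqrt (B.apply_sq_le_of_symm hB0 (BilinForm.isSymm_iff.mp hB) x y)

theorem abs_apply_add_apply_sub_le (B S : BilinForm ℝ E) (hB : B.IsSymm) (hS : S.IsSymm)
    (hB0 : ∀ x, 0 ≤ B x x) (hBS : ∀ x, B x x ≤ S x x) {d e : E} (hde : S d d ≤ S e e) (z : E) :
    |B d z + S (e - d) z| ≤ 3 * √(S e e) * √(S z z) := by
  have hS0 (x : E) : 0 ≤ S x x := (hB0 x).trans (hBS x)
  have hd : √(S d d) ≤ √(S e e) := Real.sqrt_le_sqrt hde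
  have hBdz : |B d z| ≤ √(S e e) * √(S z z) :=
    calc |B d z| ≤ √(B d d) * √(B z z) := abs_apply_le_sqrt_mul_sqrt B hB0 hB d z
      _ ≤ √(S d d) * √(S z z) := by gcongr <;> exact hBS _
      _ ≤ √(S e e) * √(S z z) := by gcongr
  have hSdz : |S d z| ≤ √(S e e) * √(S z z) :=
    (abs_apply_le_sqrt_mul_sqrt S hS0 hS d z).trans (by gcongr)
  have hSez : |S e z| ≤ √(S e e) * √(S z z) := abs_apply_le_sqrt_mul_sqrt S hS0 hS e z
  calc |B d z + S (e - d) z| = |B d z + (S e z - S d z)| := by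
        rw [map_sub, LinearMap.sub_apply]
    _ ≤ |B d z| + (|S e z| + |S d z|) := (abs_add_le _ _).trans (by gcongr; exact abs_sub _ _)
    _ ≤ 3 * √(S e e) * √(S z z) := by linarith

end BilinForm

section WeightedInner

variable {ι : Type*} [Fintype ι]

def weightedInner (σ : ι → ℝ) : BilinForm ℝ (ι → ℝ) :=
  LinearMap.mk₂ ℝ (fun w v => ∑ i, σ i * w i * v i)
    (fun x y v => by simp only [Pi.add_apply, mul_add, add_mul, Finset.sum_add_distrib])
    (fun c x v => by
      simp only [Pi.smul_apply, smul_eq_mul, Finset.mul_sum]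
      exact Finset.sum_congr rfl fun i _ => by ring)
    (fun w x y => by simp only [Pi.add_apply, mul_add, Finset.sum_add_distrib])
    (fun c w x => by
      simp only [Pi.smul_apply, smul_eq_mul, Finset.mul_sum]
      exact Finset.sum_congr rfl fun i _ => by ring)

theorem weightedInner_apply (σ w v : ι → ℝ) : weightedInner σ w v = ∑ i, σ i * w i * v i :=
  rfl

theorem weightedInner_isSymm (σ : ι → ℝ) : (weightedInner σ).IsSymm :=
  ⟨fun w v => by simp only [weightedInner_apply, mul_right_comm]⟩

theorem weightedInner_self_le_of_abs_le {σ d e : ι → ℝ} (hσ : ∀ i, 0 ≤ σ i)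
    (hde : ∀ i, |d i| ≤ |e i|) : weightedInner σ d d ≤ weightedInner σ e e := by
  simp only [weightedInner_apply, mul_assoc]
  refine Finset.sum_le_sum fun i _ => mul_le_mul_of_nonneg_left ?_ (hσ i)
  simpa only [abs_mul_abs_self] using mul_self_le_mul_self (abs_nonneg _) (hde i)

end WeightedInner

theorem stmt_4_general (n : ℕ) (a b σ : Fin n → ℝ)
    (hσ : ∀ i, 0 < σ i)
    (P Q : (Fin n → ℝ) → (Fin n → ℝ))
    (hP : ∀ v i, P v i = max (a i) (min (v i) (b i)))
    (hQ : ∀ v, Q v = v - P v)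
    (s : (Fin n → ℝ) → (Fin n → ℝ) → ℝ)
    (hs : ∀ w v, s w v = ∑ i, σ i * w i * v i)
    (A : (Fin n → ℝ) → (Fin n → ℝ) → ℝ)
    (hA_add_left : ∀ x y z, A (x + y) z = A x z + A y z)
    (hA_smul_left : ∀ (c : ℝ) x z, A (c • x) z = c * A x z)
    (hA_symm : ∀ x z, A x z = A z x)
    (hA_psd : ∀ z, 0 ≤ A z z)
    (hA_le_s : ∀ z, A z z ≤ s z z)
    (v r z : Fin n → ℝ) :
    |A (P v - P r) z + s (Q v - Q r) z| ≤
      3 * Real.sqrt (s (v - r) (v - r)) * Real.sqrt (s z z) := by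
  obtain rfl : s = fun w v => weightedInner σ w v := funext₂ hs
  beta_reduce at hA_le_s ⊢
  have hPQ : Q v - Q r = (v - r) - (P v - P r) := by rw [hQ, hQ]; abel
  have hcontr (i : Fin n) : |(P v - P r) i| ≤ |(v - r) i| := by
    simpa only [Pi.sub_apply, hP] using abs_max_min_sub_max_min_le (a i) (b i) (v i) (r i)
  rw [hPQ]
  exact abs_apply_add_apply_sub_le (bilinFormOfSymm A hA_add_left hA_smul_left hA_symm)
    (weightedInner σ) (bilinFormOfSymm_isSymm A _ _ _) (weightedInner_isSymm σ) hA_psd hA_le_s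
    (weightedInner_self_le_of_abs_le (fun i => (hσ i).le) hcontr) z

/-- Lipschitz continuity (with respect to the norm induced by `s`) of the operator
`[T̃₁ r, z] = A (P r) z + s (Q r) z`:
`|A (P v - P r) z + s (Q v - Q r) z| ≤ 3 * √(s (v - r) (v - r)) * √(s z z)`. -/
theorem stmt_4 (n : ℕ) (a b σ : Fin n → ℝ)
    (hab : ∀ i, a i ≤ b i) (hσ : ∀ i, 0 < σ i)
    (P Q : (Fin n → ℝ) → (Fin n → ℝ))
    (hP : ∀ v i, P v i = max (a i) (min (v i) (b i)))
    (hQ : ∀ v, Q v = v - P v)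
    (s : (Fin n → ℝ) → (Fin n → ℝ) → ℝ)
    (hs : ∀ w v, s w v = ∑ i, σ i * w i * v i)
    (A : (Fin n → ℝ) → (Fin n → ℝ) → ℝ)
    (hA_add_left : ∀ x y z, A (x + y) z = A x z + A y z)
    (hA_smul_left : ∀ (c : ℝ) x z, A (c • x) z = c * A x z)
    (hA_symm : ∀ x z, A x z = A z x)
    (hA_psd : ∀ z, 0 ≤ A z z)
    (hA_le_s : ∀ z, A z z ≤ s z z)
    (v r z : Fin n → ℝ) :
    |A (P v - P r) z + s (Q v - Q r) z| ≤
      3 * Real.sqrt (s (v - r) (v - r)) * Real.sqrt (s z z) :=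
  stmt_4_general n a b σ hσ P Q hP hQ s hs A hA_add_left hA_smul_left hA_symm hA_psd hA_le_s v r z
end

section
/- Let n ∈ ℕ, let λ : Fin n → ℝ satisfy λ i ≥ 0 for all i and ∑_{i} λ i = 1, and let a, b, c ∈ ℝ. Suppose m, M, t : Fin n → ℝ satisfy, for every i: m i ≤ c ≤ M i and a − m i ≤ b − M i. Define p i = max(a − m i, min(t i, b − M i)). Then a ≤ (∑_{i} λ i · p i) + c ≤ b. -/
/-! The truncation clamps each nodal value `t i` into `[a - m i, b - M i] ⊆ [a - c, b - c]`;
an interval is convex, so the convex combination of the truncated values stays in it. -/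

theorem max_min_mem_Icc {α : Type*} [LinearOrder α] {lo hi : α} (h : lo ≤ hi) (x : α) :
    max lo (min x hi) ∈ Set.Icc lo hi :=
  ⟨le_max_left _ _, max_le h (min_le_right _ _)⟩

/-- Pointwise content of Lemma `COR:positivity_preservation`: convex combinations
of truncated nodal values, shifted by the piecewise-constant value `c`,
stay in the invariant interval `[a, b]`. -/
theorem stmt_7 (n : ℕ) (lam : Fin n → ℝ)
    (hlam : ∀ i, 0 ≤ lam i) (hsum : ∑ i, lam i = 1)
    (a b c : ℝ) (m M t : Fin n → ℝ)
    (hmc : ∀ i, m i ≤ c) (hcM : ∀ i, c ≤ M i)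
    (hab : ∀ i, a - m i ≤ b - M i)
    (p : Fin n → ℝ)
    (hp : ∀ i, p i = max (a - m i) (min (t i) (b - M i))) :
    a ≤ (∑ i, lam i * p i) + c ∧ (∑ i, lam i * p i) + c ≤ b := by
  have hp_mem : ∀ i, p i ∈ Set.Icc (a - c) (b - c) := fun i =>
    hp i ▸ Set.Icc_subset_Icc (by linarith [hmc i]) (by linarith [hcM i])
      (max_min_mem_Icc (hab i) (t i))
  have hsum_mem : ∑ i, lam i * p i ∈ Set.Icc (a - c) (b - c) := by
    simpa only [smul_eq_mul] using
      (convex_Icc (a - c) (b - c)).sum_mem (fun i _ => hlam i) hsum (fun i _ => hp_mem i)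
  constructor <;> linarith [hsum_mem.1, hsum_mem.2]
end

section
/- Let M and J be real symmetric n×n matrices with M positive definite and J positive semidefinite, let h ∈ ℝ with 0 < h ≤ 1, let β ≥ 1 and c₁, c₂ > 0 be real numbers, and suppose c₁ · h · (xᵀ M x) ≤ xᵀ J x ≤ c₂ · h⁻¹ · (xᵀ M x) for every x ∈ ℝⁿ. Then the matrix A = M + h^{−β} J is symmetric positive definite and its condition number satisfies λ_max(A)/λ_min(A) ≤ ((1 + c₂)/c₁) · h⁻² · (λ_max(M)/λ_min(M)); in particular, the bound is independent of β. -/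
open Matrix


lemma quad_bounds {n : ℕ} [Nonempty (Fin n)] (M : Matrix (Fin n) (Fin n) ℝ)
    (hM : M.IsHermitian) (x : Fin n → ℝ) :
    (⨅ i, hM.eigenvalues i) * (x ⬝ᵥ x) ≤ x ⬝ᵥ M.mulVec x ∧
      x ⬝ᵥ M.mulVec x ≤ (⨆ i, hM.eigenvalues i) * (x ⬝ᵥ x) := by
  set U : Matrix (Fin n) (Fin n) ℝ := (hM.eigenvectorUnitary : Matrix (Fin n) (Fin n) ℝ)
  set y : Fin n → ℝ := x ᵥ* U with hy
  have hUU : U * star U = 1 := (Matrix.mem_unitaryGroup_iff).mp hM.eigenvectorUnitary.2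
  have hstar : star U = Uᵀ := by
    ext i j; simp [star_eq_conjTranspose, conjTranspose]
  have hquad : x ⬝ᵥ M.mulVec x = ∑ i, hM.eigenvalues i * (y i)^2 := by
    conv_lhs => rw [hM.spectral_theorem]
    rw [Unitary.conjStarAlgAut_apply, ← mulVec_mulVec, ← mulVec_mulVec, dotProduct_mulVec]
    have : (star U) *ᵥ x = y := by rw [hstar, mulVec_transpose]
    rw [this]
    simp only [dotProduct, mulVec_diagonal, Function.comp, RCLike.ofReal_real_eq_id, id]
    exact Finset.sum_congr rfl fun i _ => by ring
  have hnorm : x ⬝ᵥ x = ∑ i, (y i)^2 := by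
    have : y ⬝ᵥ y = x ⬝ᵥ ((U * star U) *ᵥ x) := by
      rw [← mulVec_mulVec, dotProduct_mulVec, hstar, mulVec_transpose]
    rw [hUU, one_mulVec] at this
    rw [← this]
    simp [dotProduct, sq]
  constructor
  · rw [hquad, hnorm, Finset.mul_sum]
    apply Finset.sum_le_sum
    intro i _
    have h1 : (⨅ j, hM.eigenvalues j) ≤ hM.eigenvalues i := ciInf_le (Set.Finite.bddBelow (Set.finite_range _)) i
    nlinarith [sq_nonneg (y i)]
  · rw [hquad, hnorm, Finset.mul_sum]
    apply Finset.sum_le_sum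
    intro i _
    have h1 : hM.eigenvalues i ≤ ⨆ j, hM.eigenvalues j := le_ciSup (Set.Finite.bddAbove (Set.finite_range _)) i
    nlinarith [sq_nonneg (y i)]

lemma eig_eq_quad {n : ℕ} (A : Matrix (Fin n) (Fin n) ℝ) (hA : A.IsHermitian) (i : Fin n) :
    hA.eigenvalues i = (hA.eigenvectorBasis i : Fin n → ℝ) ⬝ᵥ A.mulVec (hA.eigenvectorBasis i) := by
  simpa using hA.eigenvalues_eq i

lemma eigvec_unit {n : ℕ} (A : Matrix (Fin n) (Fin n) ℝ) (hA : A.IsHermitian) (i : Fin n) :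
    (hA.eigenvectorBasis i : Fin n → ℝ) ⬝ᵥ (hA.eigenvectorBasis i : Fin n → ℝ) = 1 := by
  have h1 : (inner ℝ (hA.eigenvectorBasis i) (hA.eigenvectorBasis i) : ℝ) = 1 := by
    rw [real_inner_self_eq_norm_sq, hA.eigenvectorBasis.orthonormal.1 i]; norm_num
  rw [EuclideanSpace.inner_eq_star_dotProduct] at h1
  simpa using h1

/-- Main conditioning claim of Section 6.2: for `A = M + h^{-β} J` with
`c₁ h xᵀMx ≤ xᵀJx ≤ c₂ h⁻¹ xᵀMx`, the matrix `A` is symmetric positive definite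
and `κ(A) ≤ ((1 + c₂)/c₁) h⁻² κ(M)`, independently of `β`. -/
theorem stmt_11 (n : ℕ) (hn : 0 < n)
    (M J : Matrix (Fin n) (Fin n) ℝ)
    (hM : M.IsHermitian) (hJ : J.IsHermitian)
    (hMpd : M.PosDef) (hJpsd : J.PosSemidef)
    (h : ℝ) (hh0 : 0 < h) (hh1 : h ≤ 1)
    (β : ℝ) (hβ : 1 ≤ β)
    (c₁ c₂ : ℝ) (hc₁ : 0 < c₁) (hc₂ : 0 < c₂)
    (hlow : ∀ x : Fin n → ℝ, c₁ * h * (x ⬝ᵥ M.mulVec x) ≤ x ⬝ᵥ J.mulVec x)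
    (hhigh : ∀ x : Fin n → ℝ, x ⬝ᵥ J.mulVec x ≤ c₂ * h⁻¹ * (x ⬝ᵥ M.mulVec x)) :
    (M + h ^ (-β) • J).PosDef ∧
    ∀ (hA : (M + h ^ (-β) • J).IsHermitian),
      (⨆ i, hA.eigenvalues i) / (⨅ i, hA.eigenvalues i) ≤
        ((1 + c₂) / c₁) * h ^ (-2 : ℝ) *
          ((⨆ i, hM.eigenvalues i) / (⨅ i, hM.eigenvalues i)) := by
  have : Nonempty (Fin n) := ⟨⟨0, hn⟩⟩
  have ha0 : (0:ℝ) < h ^ (-β) := Real.rpow_pos_of_pos hh0 _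
  have hJs : (h ^ (-β) • J).PosSemidef := by
    refine posSemidef_iff_dotProduct_mulVec.mpr ⟨?_, ?_⟩
    · rw [Matrix.IsHermitian, conjTranspose_smul, hJpsd.1.eq]
      congr 1
    · intro x
      simp only [smul_mulVec, dotProduct_smul, smul_eq_mul]
      exact mul_nonneg ha0.le (hJpsd.dotProduct_mulVec_nonneg x)
  have hApd : (M + h ^ (-β) • J).PosDef := hMpd.add_posSemidef hJs
  refine ⟨hApd, fun hA => ?_⟩
  -- quadratic form identities and bounds
  have hMq : ∀ x : Fin n → ℝ, 0 ≤ x ⬝ᵥ M.mulVec x := fun x => by simpa using hMpd.posSemidef.dotProduct_mulVec_nonneg x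
  have hquad : ∀ x : Fin n → ℝ,
      x ⬝ᵥ (M + h ^ (-β) • J).mulVec x = x ⬝ᵥ M.mulVec x + h ^ (-β) * (x ⬝ᵥ J.mulVec x) := by
    intro x
    simp [add_mulVec, smul_mulVec, dotProduct_add, dotProduct_smul, smul_eq_mul]
  have hrp1 : h ^ (-β) * h⁻¹ = h ^ (-β - 1) := by
    rw [Real.rpow_sub hh0, Real.rpow_one, div_eq_mul_inv]
  have hrp2 : h ^ (-β) * h = h ^ (1 - β) := by
    rw [Real.rpow_sub hh0, Real.rpow_one, Real.rpow_neg hh0.le]; ring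
  have hge1 : (1:ℝ) ≤ h ^ (-β - 1) :=
    Real.one_le_rpow_of_pos_of_le_one_of_nonpos hh0 hh1 (by linarith)
  have hb0 : (0:ℝ) < h ^ (1 - β) := Real.rpow_pos_of_pos hh0 _
  have hAup : ∀ x : Fin n → ℝ,
      x ⬝ᵥ (M + h ^ (-β) • J).mulVec x ≤ (1 + c₂) * h ^ (-β - 1) * (x ⬝ᵥ M.mulVec x) := by
    intro x
    rw [hquad]
    have h1 : h ^ (-β) * (x ⬝ᵥ J.mulVec x) ≤ h ^ (-β) * (c₂ * h⁻¹ * (x ⬝ᵥ M.mulVec x)) :=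
      mul_le_mul_of_nonneg_left (hhigh x) ha0.le
    have h2 : h ^ (-β) * (c₂ * h⁻¹ * (x ⬝ᵥ M.mulVec x)) = c₂ * h ^ (-β - 1) * (x ⬝ᵥ M.mulVec x) := by
      rw [← hrp1]; ring
    nlinarith [hMq x, mul_nonneg (hMq x) (sub_nonneg.2 hge1)]
  have hAlow : ∀ x : Fin n → ℝ,
      c₁ * h ^ (1 - β) * (x ⬝ᵥ M.mulVec x) ≤ x ⬝ᵥ (M + h ^ (-β) • J).mulVec x := by
    intro x
    rw [hquad]
    have h1 : h ^ (-β) * (c₁ * h * (x ⬝ᵥ M.mulVec x)) ≤ h ^ (-β) * (x ⬝ᵥ J.mulVec x) :=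
      mul_le_mul_of_nonneg_left (hlow x) ha0.le
    have h2 : h ^ (-β) * (c₁ * h * (x ⬝ᵥ M.mulVec x)) = c₁ * h ^ (1 - β) * (x ⬝ᵥ M.mulVec x) := by
      rw [← hrp2]; ring
    nlinarith [hMq x]
  -- eigenvalue bounds
  set ΛM : Fin n → ℝ := hM.eigenvalues
  set sM := ⨆ i, ΛM i
  set iM := ⨅ i, ΛM i
  have hiMpos : 0 < iM := by
    obtain ⟨j, hj⟩ := Finite.exists_min ΛM
    exact lt_of_lt_of_le (hMpd.eigenvalues_pos j) (le_ciInf hj)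
  have hsMpos : 0 < sM := lt_of_lt_of_le (hMpd.eigenvalues_pos (Classical.arbitrary _))
    (le_ciSup (Set.Finite.bddAbove (Set.finite_range _)) _)
  have hup : ∀ i, hA.eigenvalues i ≤ (1 + c₂) * h ^ (-β - 1) * sM := by
    intro i
    rw [eig_eq_quad _ hA i]
    refine le_trans (hAup _) (mul_le_mul_of_nonneg_left ?_ (by positivity))
    have := (quad_bounds M hM (hA.eigenvectorBasis i : Fin n → ℝ)).2
    rwa [eigvec_unit _ hA i, mul_one] at this
  have hdown : ∀ i, c₁ * h ^ (1 - β) * iM ≤ hA.eigenvalues i := by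
    intro i
    rw [eig_eq_quad _ hA i]
    refine le_trans (mul_le_mul_of_nonneg_left ?_ (by positivity)) (hAlow _)
    have := (quad_bounds M hM (hA.eigenvectorBasis i : Fin n → ℝ)).1
    rwa [eigvec_unit _ hA i, mul_one] at this
  have hsup : (⨆ i, hA.eigenvalues i) ≤ (1 + c₂) * h ^ (-β - 1) * sM := ciSup_le hup
  have hinf : c₁ * h ^ (1 - β) * iM ≤ ⨅ i, hA.eigenvalues i := le_ciInf hdown
  have key : (⨆ i, hA.eigenvalues i) / (⨅ i, hA.eigenvalues i) ≤
      ((1 + c₂) * h ^ (-β - 1) * sM) / (c₁ * h ^ (1 - β) * iM) :=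
    div_le_div₀ (by positivity) hsup (by positivity) hinf
  refine key.trans_eq ?_
  have hsplit : h ^ (-β - 1 : ℝ) = h ^ (-2 : ℝ) * h ^ (1 - β) := by
    rw [← Real.rpow_add hh0]; ring_nf
  rw [hsplit]
  field_simp
end
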